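/- Concatenation of paths respects tree-like equivalence: if Γ₁, Γ₁', Γ₂, Γ₂' : [0,1] → ℝ^N are Lipschitz paths with Γ₁ tree-like equivalent to Γ₁' and Γ₂ tree-like equivalent to Γ₂', then Γ₁ * Γ₂ is tree-like equivalent to Γ₁' * Γ₂'. -/

import Mathlib

noncomputable section

/-- Concatenation of paths: `(Γ₁*Γ₂)(t) = Γ₁(2t)` for `t ∈ [0,1/2)` and
`(Γ₁*Γ₂)(t) = Γ₁(1) − Γ₂(0) + Γ₂(2t−1)` for `t ∈ [1/2,1]`. -/
def concat {N : ℕ} (Γ₁ Γ₂ : ℝ → EuclideanSpace ℝ (Fin N)) :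
    ℝ → EuclideanSpace ℝ (Fin N) :=
  fun t => if t < 1/2 then Γ₁ (2 * t) else Γ₁ 1 - Γ₂ 0 + Γ₂ (2 * t - 1)

/-- The inverse path `Γ⁻¹(t) = Γ(1−t)`. -/
def pathInv {N : ℕ} (Γ : ℝ → EuclideanSpace ℝ (Fin N)) : ℝ → EuclideanSpace ℝ (Fin N) :=
  fun t => Γ (1 - t)

/-- A path `Γ : [0,1] → ℝ^N` is Lipschitz tree-like if there is a continuous nonnegative
function `h : [0,1] → ℝ` of bounded variation with `h(0) = h(1) = 0` such that
`‖Γ(t) − Γ(s)‖ ≤ h(s) + h(t) − 2 inf_{u ∈ [s,t]} h(u)` for all `0 ≤ s ≤ t ≤ 1`. -/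
def LipschitzTreeLike {N : ℕ} (Γ : ℝ → EuclideanSpace ℝ (Fin N)) : Prop :=
  ∃ h : ℝ → ℝ, ContinuousOn h (Set.Icc 0 1) ∧ (∀ t ∈ Set.Icc (0:ℝ) 1, 0 ≤ h t) ∧
    BoundedVariationOn h (Set.Icc 0 1) ∧ h 0 = 0 ∧ h 1 = 0 ∧
    ∀ s t : ℝ, 0 ≤ s → s ≤ t → t ≤ 1 →
      ‖Γ t - Γ s‖ ≤ h s + h t - 2 * sInf (h '' Set.Icc s t)

/-- Two paths are tree-like equivalent if `Γ₁ * Γ₂⁻¹` is Lipschitz tree-like. -/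
def TreeLikeEquiv {N : ℕ} (Γ₁ Γ₂ : ℝ → EuclideanSpace ℝ (Fin N)) : Prop :=
  LipschitzTreeLike (concat Γ₁ (pathInv Γ₂))

/-- A Lipschitz path on `[0,1]`. -/
def IsLipPath {N : ℕ} (Γ : ℝ → EuclideanSpace ℝ (Fin N)) : Prop :=
  ∃ K : NNReal, LipschitzOnWith K Γ (Set.Icc 0 1)

/-!
Write `A = Γ₁ * Γ₁'⁻¹` and `B = Γ₂ * Γ₂'⁻¹`. Up to a translation, the loop
`(Γ₁ * Γ₂) * (Γ₁' * Γ₂')⁻¹` is `A` with `B` inserted at its midpoint: it equals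
`A ∘ φ + B ∘ ψ - B 0`, where `φ` pauses at `1/2` exactly while `ψ` runs through `[0, 1]`
(`φ = outerReparam`, `ψ = innerReparam`). If `hA`, `hB` are heights for `A`, `B`, then
`hA ∘ φ + hB ∘ ψ` is a height for the loop: `hA ∘ φ` is constant while `ψ` moves and `hB ∘ ψ`
vanishes otherwise, so the minima of the two summands over any interval can be realised at one
common point.
-/

open Set

theorem eVariationOn_add_le {α E : Type*} [LinearOrder α] [SeminormedAddCommGroup E]
    (f g : α → E) (s : Set α) :
    eVariationOn (f + g) s ≤ eVariationOn f s + eVariationOn g s := by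
  refine iSup_le fun ⟨n, u, hu, us⟩ => ?_
  calc ∑ i ∈ Finset.range n, edist ((f + g) (u (i + 1))) ((f + g) (u i))
      ≤ ∑ i ∈ Finset.range n,
          (edist (f (u (i + 1))) (f (u i)) + edist (g (u (i + 1))) (g (u i))) :=
        Finset.sum_le_sum fun i _ => edist_add_add_le _ _ _ _
    _ ≤ eVariationOn f s + eVariationOn g s := by
        rw [Finset.sum_add_distrib]
        exact add_le_add (eVariationOn.sum_le hu us) (eVariationOn.sum_le hu us)

theorem BoundedVariationOn.add {α E : Type*} [LinearOrder α] [SeminormedAddCommGroup E]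
    {f g : α → E} {s : Set α} (hf : BoundedVariationOn f s) (hg : BoundedVariationOn g s) :
    BoundedVariationOn (f + g) s :=
  ne_top_of_le_ne_top (ENNReal.add_ne_top.2 ⟨hf, hg⟩) (eVariationOn_add_le f g s)

/-- `LipschitzTreeLike` with its witness made explicit, and the infimum replaced by a point
where it is attained. -/
structure IsTreeHeight {E : Type*} [SeminormedAddCommGroup E] (Γ : ℝ → E) (h : ℝ → ℝ) :
    Prop where
  continuousOn : ContinuousOn h (Icc 0 1)
  nonneg : ∀ t ∈ Icc (0 : ℝ) 1, 0 ≤ h t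
  boundedVariationOn : BoundedVariationOn h (Icc 0 1)
  zero : h 0 = 0
  one : h 1 = 0
  norm_sub_le : ∀ s t : ℝ, 0 ≤ s → s ≤ t → t ≤ 1 →
    ∃ u ∈ Icc s t, ‖Γ t - Γ s‖ ≤ h s + h t - 2 * h u

theorem lipschitzTreeLike_iff_exists_isTreeHeight {N : ℕ}
    {Γ : ℝ → EuclideanSpace ℝ (Fin N)} : LipschitzTreeLike Γ ↔ ∃ h, IsTreeHeight Γ h := by
  refine exists_congr fun h => ?_
  constructor
  · rintro ⟨hc, hnn, hbv, h0, h1, hΓ⟩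
    refine ⟨hc, hnn, hbv, h0, h1, fun s t hs hst ht => ?_⟩
    have hK : IsCompact (h '' Icc s t) :=
      isCompact_Icc.image_of_continuousOn (hc.mono (Icc_subset_Icc hs ht))
    obtain ⟨u, hu, hmin⟩ := hK.sInf_mem (nonempty_Icc.2 hst |>.image h)
    exact ⟨u, hu, hmin ▸ hΓ s t hs hst ht⟩
  · rintro ⟨hc, hnn, hbv, h0, h1, hΓ⟩
    refine ⟨hc, hnn, hbv, h0, h1, fun s t hs hst ht => ?_⟩
    obtain ⟨u, hu, hle⟩ := hΓ s t hs hst ht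
    have hK : IsCompact (h '' Icc s t) :=
      isCompact_Icc.image_of_continuousOn (hc.mono (Icc_subset_Icc hs ht))
    have : sInf (h '' Icc s t) ≤ h u := csInf_le hK.bddBelow (mem_image_of_mem h hu)
    linarith

theorem exists_mem_Icc_add_le_add {h₁ h₂ : ℝ → ℝ} {a b s t u₁ u₂ : ℝ}
    (hconst : ∀ u ∈ Icc a b, h₁ u = h₁ a) (hvanish : ∀ u ∉ Ioo a b, h₂ u = 0)
    (hnonneg : 0 ≤ h₂ u₂) (hu₁ : u₁ ∈ Icc s t) (hu₂ : u₂ ∈ Icc s t) :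
    ∃ u ∈ Icc s t, h₁ u + h₂ u ≤ h₁ u₁ + h₂ u₂ := by
  by_cases hin : u₁ ∈ Ioo a b
  · refine ⟨max a (min b u₂), ⟨?_, ?_⟩, ?_⟩
    · exact le_max_of_le_right (le_min (hu₁.1.trans hin.2.le) hu₂.1)
    · exact max_le (hin.1.le.trans hu₁.2) ((min_le_right _ _).trans hu₂.2)
    have hab : a ≤ b := hin.1.le.trans hin.2.le
    rw [hconst _ ⟨le_max_left _ _, max_le hab (min_le_left _ _)⟩,
      hconst _ (Ioo_subset_Icc_self hin)]
    gcongr h₁ a + ?_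
    rcases le_or_gt u₂ a with h | ha
    · rw [max_eq_left ((min_le_right _ _).trans h), hvanish a (fun h => h.1.false)]
      exact hnonneg
    rcases le_or_gt b u₂ with hb | hb
    · rw [min_eq_left hb, max_eq_right hab, hvanish b (fun h => h.2.false)]
      exact hnonneg
    · rw [min_eq_right hb.le, max_eq_right ha.le]
  · exact ⟨u₁, hu₁, by rw [hvanish _ hin]; linarith⟩

namespace IsTreeHeight

variable {E : Type*} [SeminormedAddCommGroup E] {Γ Γ₁ Γ₂ : ℝ → E} {h h₁ h₂ : ℝ → ℝ}

theorem comp (hΓ : IsTreeHeight Γ h) {φ : ℝ → ℝ} (hmono : Monotone φ) (hcont : Continuous φ)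
    (h0 : φ 0 = 0) (h1 : φ 1 = 1) : IsTreeHeight (Γ ∘ φ) (h ∘ φ) := by
  have hmaps : MapsTo φ (Icc 0 1) (Icc 0 1) := fun x hx =>
    ⟨h0 ▸ hmono hx.1, h1 ▸ hmono hx.2⟩
  refine ⟨hΓ.continuousOn.comp hcont.continuousOn hmaps, fun t ht => hΓ.nonneg _ (hmaps ht),
    ne_top_of_le_ne_top hΓ.boundedVariationOn
      (eVariationOn.comp_le_of_monotoneOn h φ (hmono.monotoneOn _) hmaps),
    by simp [h0, hΓ.zero], by simp [h1, hΓ.one], fun s t hs hst ht => ?_⟩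
  obtain ⟨v, hv, hle⟩ := hΓ.norm_sub_le (φ s) (φ t) (hmaps ⟨hs, hst.trans ht⟩).1
    (hmono hst) (hmaps ⟨hs.trans hst, ht⟩).2
  obtain ⟨u, hu, rfl⟩ := intermediate_value_Icc hst hcont.continuousOn hv
  exact ⟨u, hu, hle⟩

theorem sub_const (hΓ : IsTreeHeight Γ h) (c : E) : IsTreeHeight (fun t => Γ t - c) h := by
  refine ⟨hΓ.continuousOn, hΓ.nonneg, hΓ.boundedVariationOn, hΓ.zero, hΓ.one, ?_⟩
  simpa only [sub_sub_sub_cancel_right] using hΓ.norm_sub_le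

theorem add (hΓ₁ : IsTreeHeight Γ₁ h₁) (hΓ₂ : IsTreeHeight Γ₂ h₂) {a b : ℝ}
    (hconst : ∀ u ∈ Icc a b, h₁ u = h₁ a) (hvanish : ∀ u ∉ Ioo a b, h₂ u = 0) :
    IsTreeHeight (Γ₁ + Γ₂) (h₁ + h₂) := by
  refine ⟨hΓ₁.continuousOn.add hΓ₂.continuousOn,
    fun t ht => add_nonneg (hΓ₁.nonneg t ht) (hΓ₂.nonneg t ht),
    hΓ₁.boundedVariationOn.add hΓ₂.boundedVariationOn, by simp [hΓ₁.zero, hΓ₂.zero],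
    by simp [hΓ₁.one, hΓ₂.one], fun s t hs hst ht => ?_⟩
  obtain ⟨u₁, hu₁, hle₁⟩ := hΓ₁.norm_sub_le s t hs hst ht
  obtain ⟨u₂, hu₂, hle₂⟩ := hΓ₂.norm_sub_le s t hs hst ht
  obtain ⟨u, hu, hle⟩ := exists_mem_Icc_add_le_add hconst hvanish
    (hΓ₂.nonneg u₂ ⟨hs.trans hu₂.1, hu₂.2.trans ht⟩) hu₁ hu₂
  refine ⟨u, hu, ?_⟩
  calc ‖(Γ₁ + Γ₂) t - (Γ₁ + Γ₂) s‖ = ‖(Γ₁ t - Γ₁ s) + (Γ₂ t - Γ₂ s)‖ := by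
        rw [Pi.add_apply, Pi.add_apply, add_sub_add_comm]
    _ ≤ ‖Γ₁ t - Γ₁ s‖ + ‖Γ₂ t - Γ₂ s‖ := norm_add_le _ _
    _ ≤ (h₁ + h₂) s + (h₁ + h₂) t - 2 * (h₁ + h₂) u := by simp only [Pi.add_apply]; linarith

end IsTreeHeight

/-- Runs through `[0, 1/2]` on `[0, 1/4]`, waits at `1/2` until `3/4`, then runs through
`[1/2, 1]`. -/
def outerReparam (t : ℝ) : ℝ := min (2 * t) (max (2 * t - 1) (1 / 2))

/-- Waits at `0` until `1/4`, runs through `[0, 1]` on `[1/4, 3/4]`, then waits at `1`. -/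
def innerReparam (t : ℝ) : ℝ := min 1 (max 0 (2 * t - 1 / 2))

theorem monotone_outerReparam : Monotone outerReparam := fun _ _ h => by
  unfold outerReparam; gcongr

theorem continuous_outerReparam : Continuous outerReparam := by
  unfold outerReparam; fun_prop

theorem monotone_innerReparam : Monotone innerReparam := fun _ _ h => by
  unfold innerReparam; gcongr

theorem continuous_innerReparam : Continuous innerReparam := by
  unfold innerReparam; fun_prop

theorem outerReparam_of_le {t : ℝ} (ht : t ≤ 1 / 4) : outerReparam t = 2 * t := by
  unfold outerReparam; apply min_eq_left; apply le_max_of_le_right; linarith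

theorem outerReparam_of_mem_Icc {t : ℝ} (ht : t ∈ Icc (1 / 4 : ℝ) (3 / 4)) :
    outerReparam t = 1 / 2 := by
  unfold outerReparam; rw [max_eq_right (by linarith [ht.2]), min_eq_right (by linarith [ht.1])]

theorem outerReparam_of_ge {t : ℝ} (ht : 3 / 4 ≤ t) : outerReparam t = 2 * t - 1 := by
  unfold outerReparam; rw [max_eq_left (by linarith), min_eq_right (by linarith)]

theorem innerReparam_of_le {t : ℝ} (ht : t ≤ 1 / 4) : innerReparam t = 0 := by
  unfold innerReparam; rw [max_eq_left (by linarith), min_eq_right zero_le_one]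

theorem innerReparam_of_mem_Icc {t : ℝ} (ht : t ∈ Icc (1 / 4 : ℝ) (3 / 4)) :
    innerReparam t = 2 * t - 1 / 2 := by
  unfold innerReparam; rw [max_eq_right (by linarith [ht.1]), min_eq_right (by linarith [ht.2])]

theorem innerReparam_of_ge {t : ℝ} (ht : 3 / 4 ≤ t) : innerReparam t = 1 := by
  unfold innerReparam; rw [max_eq_right (by linarith), min_eq_left (by linarith)]

theorem IsTreeHeight.insert_midpoint {E : Type*} [SeminormedAddCommGroup E] {A B : ℝ → E}
    {hA hB : ℝ → ℝ} (hAt : IsTreeHeight A hA) (hBt : IsTreeHeight B hB) (c : E) :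
    IsTreeHeight (A ∘ outerReparam + fun u => B (innerReparam u) - c)
      (hA ∘ outerReparam + hB ∘ innerReparam) := by
  refine (hAt.comp monotone_outerReparam continuous_outerReparam (by norm_num [outerReparam])
    (by norm_num [outerReparam])).add ((hBt.comp monotone_innerReparam continuous_innerReparam
      (by norm_num [innerReparam]) (by norm_num [innerReparam])).sub_const c)
    (a := 1 / 4) (b := 3 / 4) (fun u hu => ?_) (fun u hu => ?_)
  · simp only [Function.comp_apply, outerReparam_of_mem_Icc hu,
      outerReparam_of_mem_Icc (left_mem_Icc.2 (by norm_num : (1 / 4 : ℝ) ≤ 3 / 4))]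
  · rcases le_or_gt u (1 / 4) with h | h
    · simp only [Function.comp_apply, innerReparam_of_le h, hBt.zero]
    · simp only [Function.comp_apply, innerReparam_of_ge (not_lt.1 fun h' => hu ⟨h, h'⟩), hBt.one]

theorem concat_concat_pathInv_concat {N : ℕ} (Γ₁ Γ₁' Γ₂ Γ₂' : ℝ → EuclideanSpace ℝ (Fin N)) :
    concat (concat Γ₁ Γ₂) (pathInv (concat Γ₁' Γ₂')) =
      concat Γ₁ (pathInv Γ₁') ∘ outerReparam +
        fun u => concat Γ₂ (pathInv Γ₂') (innerReparam u) - Γ₂ 0 := by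
  funext u
  simp only [Pi.add_apply, Function.comp_apply]
  rcases lt_or_ge u (1 / 4) with hu | hu
  · rw [outerReparam_of_le hu.le, innerReparam_of_le hu.le]
    simp only [concat, pathInv]
    split_ifs <;> first | (exfalso; linarith) | (ring_nf; abel)
  rcases le_or_gt u (3 / 4) with hu' | hu'
  · rw [outerReparam_of_mem_Icc ⟨hu, hu'⟩, innerReparam_of_mem_Icc ⟨hu, hu'⟩]
    simp only [concat, pathInv]
    split_ifs <;> first | (exfalso; linarith) | (ring_nf; abel)
  · rw [outerReparam_of_ge hu'.le, innerReparam_of_ge hu'.le]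
    simp only [concat, pathInv]
    split_ifs <;> first | (exfalso; linarith) | (ring_nf; abel)

theorem concat_respects_treeLikeEquiv {N : ℕ}
    (Γ₁ Γ₁' Γ₂ Γ₂' : ℝ → EuclideanSpace ℝ (Fin N))
    (e₁ : TreeLikeEquiv Γ₁ Γ₁') (e₂ : TreeLikeEquiv Γ₂ Γ₂') :
    TreeLikeEquiv (concat Γ₁ Γ₂) (concat Γ₁' Γ₂') := by
  obtain ⟨hA, hAt⟩ := lipschitzTreeLike_iff_exists_isTreeHeight.1 e₁
  obtain ⟨hB, hBt⟩ := lipschitzTreeLike_iff_exists_isTreeHeight.1 e₂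
  rw [TreeLikeEquiv, concat_concat_pathInv_concat, lipschitzTreeLike_iff_exists_isTreeHeight]
  exact ⟨_, hAt.insert_midpoint hBt (Γ₂ 0)⟩
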